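/- Suppose h ∈ C_b([0,δ] × [0,∞)), p_t(x)dx converges weakly to ρδ_0 + q(x)dx, ∫_c^∞ |p_t − q| dx → 0 for all c > 0, and limsup_t ∫₀^{δ̃} |p_t| dx < ∞ for some δ̃ > 0. Then sup_{0≤x≤δ} |∫₀^∞ h(x,y)(p_t(dy) − p_∞(dy))| → 0 as t → ∞, where p_∞(dy) = ρδ_0(dy) + q(y)dy. -/

import Mathlib

/-!
Split `∫ h(x,y) (p_t - q)(y) dy - ρ h(x,0)` as `∫ (h(x,y) - h(x,0)) (p_t - q)(y) dy` plus
`h(x,0) (∫ (p_t - q) - ρ)`. The second term is small because testing weak convergence against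
`φ ≡ 1` gives `∫ (p_t - q) → ρ`. In the first, near `0` the factor `h(x,y) - h(x,0)` is small
uniformly in `x ∈ [0,δ]` by uniform continuity on a compact rectangle, while `∫ |p_t - q|` stays
bounded there by the `limsup` hypothesis; away from `0` the factor is bounded and
`∫_c^∞ |p_t - q| → 0`.
-/

open MeasureTheory Set Filter Topology

section

variable {α : Type*} [MeasurableSpace α] {μ : Measure α}

theorem abs_integral_mul_le_of_abs_le {g f : α → ℝ} {M : ℝ} (hf : Integrable f μ)
    (hg : ∀ᵐ y ∂μ, |g y| ≤ M) : |∫ y, g y * f y ∂μ| ≤ M * ∫ y, |f y| ∂μ := by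
  rw [← integral_const_mul M fun y => |f y|, ← Real.norm_eq_abs]
  refine norm_integral_le_of_norm_le (hf.abs.const_mul M) (hg.mono fun y hy => ?_)
  rw [Real.norm_eq_abs, abs_mul]
  exact mul_le_mul_of_nonneg_right hy (abs_nonneg _)

theorem setIntegral_abs_sub_le_of_subset {f g : α → ℝ} {s t u : Set α} (hst : s ⊆ t)
    (hsu : s ⊆ u) (hf : IntegrableOn f t μ) (hg : IntegrableOn g u μ) :
    ∫ y in s, |f y - g y| ∂μ ≤ (∫ y in t, |f y| ∂μ) + ∫ y in u, |g y| ∂μ := by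
  have hfs := (hf.mono_set hst).abs
  have hgs := (hg.mono_set hsu).abs
  calc ∫ y in s, |f y - g y| ∂μ ≤ ∫ y in s, (|f y| + |g y|) ∂μ :=
        integral_mono (hf.mono_set hst |>.sub (hg.mono_set hsu)).abs (hfs.add hgs)
          fun y => abs_sub _ _
    _ = (∫ y in s, |f y| ∂μ) + ∫ y in s, |g y| ∂μ := integral_add hfs hgs
    _ ≤ (∫ y in t, |f y| ∂μ) + ∫ y in u, |g y| ∂μ :=
        add_le_add
          (setIntegral_mono_set hf.abs (ae_of_all _ fun _ => abs_nonneg _) hst.eventuallyLE)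
          (setIntegral_mono_set hg.abs (ae_of_all _ fun _ => abs_nonneg _) hsu.eventuallyLE)

end

theorem setIntegral_Ioi_eq_Ioc_add_Ioi {E : Type*} [NormedAddCommGroup E] [NormedSpace ℝ E]
    {μ : Measure ℝ} {f : ℝ → E} {a b : ℝ} (hab : a ≤ b) (hf : IntegrableOn f (Ioi a) μ) :
    ∫ y in Ioi a, f y ∂μ = (∫ y in Ioc a b, f y ∂μ) + ∫ y in Ioi b, f y ∂μ := by
  rw [← setIntegral_union (Ioc_disjoint_Ioi le_rfl) measurableSet_Ioi
    (hf.mono_set Ioc_subset_Ioi_self) (hf.mono_set (Ioi_subset_Ioi hab)),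
    Ioc_union_Ioi_eq_Ioi hab]

theorem abs_setIntegral_mul_sub_le {μ : Measure ℝ} {g f : ℝ → ℝ} {ρ M η c : ℝ} (hc : 0 ≤ c)
    (hf : IntegrableOn f (Ioi 0) μ) (hg : AEStronglyMeasurable g (μ.restrict (Ioi 0)))
    (hM : ∀ y, |g y| ≤ M) (hη : ∀ y ∈ Ioc 0 c, |g y - g 0| ≤ η) :
    |(∫ y in Ioi 0, g y * f y ∂μ) - ρ * g 0| ≤
      η * (∫ y in Ioc 0 c, |f y| ∂μ) + 2 * M * (∫ y in Ioi c, |f y| ∂μ)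
        + M * |(∫ y in Ioi 0, f y ∂μ) - ρ| := by
  have hM2 : ∀ y, |g y - g 0| ≤ 2 * M := fun y =>
    (abs_sub _ _).trans (by linarith [hM y, hM 0])
  have hgf : IntegrableOn (fun y => (g y - g 0) * f y) (Ioi 0) μ :=
    hf.bdd_mul (hg.sub aestronglyMeasurable_const) (ae_of_all _ hM2)
  have hdecomp : (∫ y in Ioi 0, g y * f y ∂μ) - ρ * g 0 =
      (∫ y in Ioi 0, (g y - g 0) * f y ∂μ) + g 0 * ((∫ y in Ioi 0, f y ∂μ) - ρ) := by
    rw [mul_sub, ← integral_const_mul, ← add_sub_assoc, ← integral_add hgf (hf.const_mul _)]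
    simp only [sub_mul, sub_add_cancel]
    ring
  rw [hdecomp, setIntegral_Ioi_eq_Ioc_add_Ioi hc hgf]
  refine (abs_add_three _ _ _).trans (add_le_add_three ?_ ?_ ?_)
  · exact abs_integral_mul_le_of_abs_le (hf.mono_set Ioc_subset_Ioi_self)
      (ae_restrict_of_forall_mem measurableSet_Ioc hη)
  · exact abs_integral_mul_le_of_abs_le (hf.mono_set (Ioi_subset_Ioi hc)) (ae_of_all _ hM2)
  · rw [abs_mul]
    exact mul_le_mul_of_nonneg_right (hM 0) (abs_nonneg _)

theorem eventually_forall_abs_sub_le_of_continuousOn {X : Type*} [PseudoMetricSpace X]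
    {K : Set X} (hK : IsCompact K) {h : X → ℝ → ℝ}
    (hh : ContinuousOn (fun z : X × ℝ => h z.1 z.2) (K ×ˢ Ici 0)) {η : ℝ} (hη : 0 < η) :
    ∀ᶠ c in 𝓝[>] 0, ∀ x ∈ K, ∀ y ∈ Icc 0 c, |h x y - h x 0| ≤ η := by
  have huc := (hK.prod (isCompact_Icc (a := (0 : ℝ)) (b := 1))).uniformContinuousOn_of_continuous
    (hh.mono (prod_mono subset_rfl Icc_subset_Ici_self))
  obtain ⟨r, hr, hr'⟩ := Metric.uniformContinuousOn_iff_le.1 huc η hη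
  filter_upwards [Ioc_mem_nhdsGT (lt_min hr one_pos)] with c hc x hx y hy
  have hyr : y ≤ min r 1 := hy.2.trans hc.2
  have hdist : dist (x, y) (x, 0) ≤ r := by
    simpa [Prod.dist_eq, Real.dist_eq, abs_of_nonneg hy.1] using
      ⟨hr.le, hyr.trans (min_le_left _ _)⟩
  simpa [Real.dist_eq] using
    hr' (x, y) ⟨hx, hy.1, hyr.trans (min_le_right _ _)⟩ (x, 0) ⟨hx, le_rfl, zero_le_one⟩ hdist

theorem stmt14_general (δ ρ : ℝ)
    (h : ℝ → ℝ → ℝ) (q : ℝ → ℝ) (p : ℝ → ℝ → ℝ)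
    (hh_cont : ContinuousOn (fun z : ℝ × ℝ => h z.1 z.2) (Icc 0 δ ×ˢ Ici 0))
    (hh_bdd : ∃ M, ∀ x y, |h x y| ≤ M)
    (hq_int : IntegrableOn q (Ioi 0))
    (hp_int : ∀ t, IntegrableOn (p t) (Ioi 0))
    (hweak : ∀ φ : ℝ → ℝ, Continuous φ → (∃ M, ∀ y, |φ y| ≤ M) →
      Tendsto (fun t => ∫ y in Ioi (0:ℝ), p t y * φ y) atTop
        (𝓝 (ρ * φ 0 + ∫ y in Ioi (0:ℝ), q y * φ y)))
    (hL1 : ∀ c > (0:ℝ),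
      Tendsto (fun t => ∫ y in Ioi c, |p t y - q y|) atTop (𝓝 0))
    (hnear0 : ∃ δ' > (0:ℝ), ∃ C : ℝ,
      ∀ᶠ t in atTop, (∫ y in Ioo (0:ℝ) δ', |p t y|) ≤ C) :
    ∀ ε > 0, ∃ T : ℝ, ∀ t ≥ T, ∀ x ∈ Icc 0 δ,
      |(∫ y in Ioi (0:ℝ), h x y * (p t y - q y)) - ρ * h x 0| ≤ ε := by
  intro ε hε
  obtain ⟨M, hM⟩ := hh_bdd
  obtain ⟨δ', hδ', C, hC⟩ := hnear0
  obtain ⟨η, hη, hηε⟩ := exists_pos_mul_lt (half_pos hε) (C + ∫ y in Ioi (0:ℝ), |q y|)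
  obtain ⟨c, hcη, hc⟩ : ∃ c, (∀ x ∈ Icc 0 δ, ∀ y ∈ Icc 0 c, |h x y - h x 0| ≤ η) ∧ c ∈ Ioo 0 δ' :=
    ((eventually_forall_abs_sub_le_of_continuousOn isCompact_Icc hh_cont hη).and
      (Ioo_mem_nhdsGT hδ')).exists
  have hmass : Tendsto (fun t => ∫ y in Ioi (0:ℝ), (p t y - q y)) atTop (𝓝 ρ) := by
    have h1 := (hweak (fun _ => 1) continuous_const ⟨1, fun _ => abs_one.le⟩).sub_const
      (∫ y in Ioi (0:ℝ), q y)
    simp only [mul_one, add_sub_cancel_right] at h1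
    exact h1.congr fun t => (integral_sub (hp_int t) hq_int).symm
  have hsmall : Tendsto (fun t => 2 * M * (∫ y in Ioi c, |p t y - q y|)
      + M * |(∫ y in Ioi (0:ℝ), (p t y - q y)) - ρ|) atTop (𝓝 0) := by
    simpa using ((hL1 c hc.1).const_mul (2 * M)).add ((hmass.sub_const ρ).abs.const_mul M)
  have hnear : ∀ᶠ t in atTop, ∫ y in Ioc 0 c, |p t y - q y| ≤ C + ∫ y in Ioi (0:ℝ), |q y| :=
    hC.mono fun t ht => (setIntegral_abs_sub_le_of_subset
      (Ioc_subset_Ioo_right hc.2) Ioc_subset_Ioi_self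
      ((hp_int t).mono_set Ioo_subset_Ioi_self) hq_int).trans (by linarith)
  obtain ⟨T, hT⟩ := eventually_atTop.1 ((hsmall.eventually (gt_mem_nhds (half_pos hε))).and hnear)
  refine ⟨T, fun t ht x hx => ?_⟩
  obtain ⟨hsmall_t, hnear_t⟩ := hT t ht
  have hcont_x : ContinuousOn (h x) (Ici 0) :=
    hh_cont.comp (Continuous.continuousOn (by fun_prop)) fun y hy => mk_mem_prod hx hy
  have hbound := abs_setIntegral_mul_sub_le (f := fun y => p t y - q y) (ρ := ρ) hc.1.le
    ((hp_int t).sub hq_int)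
    ((hcont_x.mono Ioi_subset_Ici_self).aestronglyMeasurable measurableSet_Ioi) (hM x)
    fun y hy => hcη x hx y (Ioc_subset_Icc_self hy)
  linarith [mul_le_mul_of_nonneg_left hnear_t hη.le]

/-- Lemma (regularity from L¹ convergence): if `h ∈ C_b([0,δ] × [0,∞))`,
`p_t(x)dx → ρδ₀ + q(x)dx` weakly, `∫_c^∞ |p_t - q| → 0` for every `c > 0`, and
`limsup_t ∫₀^{δ̃} |p_t| < ∞` for some `δ̃ > 0`, then
`sup_{0 ≤ x ≤ δ} |∫₀^∞ h(x,y)(p_t(dy) - p_∞(dy))| → 0` as `t → ∞`. -/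
theorem stmt14 (δ ρ : ℝ) (hδ : 0 < δ) (hρ : 0 ≤ ρ)
    (h : ℝ → ℝ → ℝ) (q : ℝ → ℝ) (p : ℝ → ℝ → ℝ)
    (hh_cont : ContinuousOn (fun z : ℝ × ℝ => h z.1 z.2) (Icc 0 δ ×ˢ Ici 0))
    (hh_bdd : ∃ M, ∀ x y, |h x y| ≤ M)
    (hq_int : IntegrableOn q (Ioi 0))
    (hp_int : ∀ t, IntegrableOn (p t) (Ioi 0))
    (hweak : ∀ φ : ℝ → ℝ, Continuous φ → (∃ M, ∀ y, |φ y| ≤ M) →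
      Tendsto (fun t => ∫ y in Ioi (0:ℝ), p t y * φ y) atTop
        (𝓝 (ρ * φ 0 + ∫ y in Ioi (0:ℝ), q y * φ y)))
    (hL1 : ∀ c > (0:ℝ),
      Tendsto (fun t => ∫ y in Ioi c, |p t y - q y|) atTop (𝓝 0))
    (hnear0 : ∃ δ' > (0:ℝ), ∃ C : ℝ,
      ∀ᶠ t in atTop, (∫ y in Ioo (0:ℝ) δ', |p t y|) ≤ C) :
    ∀ ε > 0, ∃ T : ℝ, ∀ t ≥ T, ∀ x ∈ Icc 0 δ,
      |(∫ y in Ioi (0:ℝ), h x y * (p t y - q y)) - ρ * h x 0| ≤ ε :=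
  stmt14_general δ ρ h q p hh_cont hh_bdd hq_int hp_int hweak hL1 hnear0
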